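/- Assume E|Z| < ∞, Condition 1, and that γ(x) = c(E[Z] − x) for some c > 0. Then for every Lipschitz-continuous test function h on the closure of (a,b) and every x in (a,b): (a) ‖g_h‖ ≤ ‖h'‖/c; (b) |g_h'(x)| ≤ 2c·‖h'‖ · ( ∫_a^x F(s) ds ) · ( ∫_x^b (1 − F(t)) dt ) / ( η(x)²·p(x) ). -/

import Mathlib

open MeasureTheory Set Filter Topology

noncomputable section

/-- The open interval `(a,b)` with extended-real endpoints, viewed as a set of reals. -/
def ooE (a b : EReal) : Set ℝ := {x : ℝ | a < (x : EReal) ∧ (x : EReal) < b}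

/-- The closed interval `[a,b] ∩ ℝ` (the closure of `(a,b)` in `ℝ`). -/
def ccE (a b : EReal) : Set ℝ := {x : ℝ | a ≤ (x : EReal) ∧ (x : EReal) ≤ b}

/-- The filter on `ℝ` of right-neighbourhoods of the (possibly infinite) endpoint `a`:
for finite `a` this is `𝓝[>] a`, for `a = ⊥` it is `atBot`. -/
def nhdsGT (a : EReal) : Filter ℝ :=
  Filter.comap (fun x : ℝ => (x : EReal)) (nhdsWithin a (Set.Ioi a))

/-- The filter on `ℝ` of left-neighbourhoods of the (possibly infinite) endpoint `b`. -/
def nhdsLT (b : EReal) : Filter ℝ :=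
  Filter.comap (fun x : ℝ => (x : EReal)) (nhdsWithin b (Set.Iio b))

/-- `f` is (locally) an indefinite integral of `f'` on `s`. -/
def IsLocACOn (f f' : ℝ → ℝ) (s : Set ℝ) : Prop :=
  ∀ x ∈ s, ∀ y ∈ s, IntervalIntegrable f' volume x y ∧ f y - f x = ∫ t in x..y, f' t

/-- `f` is locally absolutely continuous on `s`. -/
def LocACOn (f : ℝ → ℝ) (s : Set ℝ) : Prop := ∃ f', IsLocACOn f f' s

/-- Condition 1: `p` is a probability density which is positive and locally absolutely
continuous on `(a,b)` and vanishes outside of `(a,b)`. -/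
structure Cond1 (a b : EReal) (p : ℝ → ℝ) : Prop where
  lt : a < b
  meas : Measurable p
  nonneg : ∀ x, 0 ≤ p x
  pos : ∀ x ∈ ooE a b, 0 < p x
  zero : ∀ x, x ∉ ooE a b → p x = 0
  integrable : MeasureTheory.Integrable p
  total : ∫ x, p x = 1
  locAC : LocACOn p (ooE a b)

/-- Condition 2: `γ` is Borel measurable, not identically zero, decreasing on `[a,b]`,
with `E|γ(Z)| < ∞` and `E[γ(Z)] = 0`. -/
structure Cond2 (a b : EReal) (p γ : ℝ → ℝ) : Prop where
  meas : Measurable γ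
  ne_zero : ∃ x ∈ ccE a b, γ x ≠ 0
  anti : AntitoneOn γ (ccE a b)
  integrable : MeasureTheory.Integrable (fun x => γ x * p x)
  mean_zero : ∫ x, γ x * p x = 0

/-- `I(x) = ∫_a^x γ(t) p(t) dt` (the density vanishes outside `(a,b)`). -/
def Ifun (γ p : ℝ → ℝ) (x : ℝ) : ℝ := ∫ t in Iic x, γ t * p t

/-- The distribution function `F` of the density `p`. -/
def Ffun (p : ℝ → ℝ) (x : ℝ) : ℝ := ∫ t in Iic x, p t

/-- `η = I/p`. -/
def etaFun (γ p : ℝ → ℝ) (x : ℝ) : ℝ := Ifun γ p x / p x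

/-- `x₀ = sup {x ∈ (a,b) : γ(x) > 0}`. -/
def xZero (a b : EReal) (γ : ℝ → ℝ) : ℝ := sSup {x | x ∈ ooE a b ∧ 0 < γ x}

/-- `E[h(Z)]` for `Z` with density `p`. -/
def meanOf (p h : ℝ → ℝ) : ℝ := ∫ x, h x * p x

/-- The standard solution `g_h` of the Stein equation `η g' + γ g = h - E[h(Z)]`. -/
def gsol (γ p h : ℝ → ℝ) (x : ℝ) : ℝ :=
  (∫ t in Iic x, (h t - meanOf p h) * p t) / (p x * etaFun γ p x)

/-- The derivative of the standard solution, defined everywhere via the Stein equation. -/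
def gsol' (γ p h : ℝ → ℝ) (x : ℝ) : ℝ :=
  (h x - meanOf p h - γ x * gsol γ p h x) / etaFun γ p x

/-! Fix `x` and put `F = F(x)`, `A = ∫_{t ≤ x} (x - t) p(t) dt = ∫_a^x F` and
`B = ∫_{t > x} (t - x) p(t) dt = ∫_x^b (1 - F)`, and for the Lipschitz `h` likewise
`α = ∫_{t ≤ x} (h(x) - h(t)) p(t) dt` and `β = ∫_{t > x} (h(t) - h(x)) p(t) dt`
(`lowerDev p id x`, `upperDev p id x`, `lowerDev p h x`, `upperDev p h x`),
so that `|α| ≤ ‖h'‖ A` and `|β| ≤ ‖h'‖ B`. Splitting every expectation at `x` gives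
`I(x) = c ((1 - F) A + F B)`, `∫_a^x (h - E h) p = -((1 - F) α + F β)`, `h(x) - E h = α - β`
and `γ(x) = c (B - A)`. Hence `g_h = -((1 - F) α + F β) / I`, which is (a), and the Stein
equation gives `g_h' = c p (B α - A β) / I²`, which is (b). -/

section Density

variable {p : ℝ → ℝ}

def lowerDev (p φ : ℝ → ℝ) (x : ℝ) : ℝ := ∫ t in Iic x, (φ x - φ t) * p t

def upperDev (p φ : ℝ → ℝ) (x : ℝ) : ℝ := ∫ t in Ioi x, (φ t - φ x) * p t

theorem one_sub_Ffun (hi : Integrable p) (htot : ∫ t, p t = 1) (x : ℝ) :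
    1 - Ffun p x = ∫ t in Ioi x, p t := by
  rw [← htot, ← intervalIntegral.integral_Iic_add_Ioi hi.integrableOn hi.integrableOn, Ffun]
  ring

theorem Ffun_le_one (hnn : ∀ t, 0 ≤ p t) (hi : Integrable p) (htot : ∫ t, p t = 1) (x : ℝ) :
    Ffun p x ≤ 1 := by
  rw [← sub_nonneg, one_sub_Ffun hi htot]
  exact setIntegral_nonneg measurableSet_Ioi fun t _ => hnn t

theorem integral_Iic_Ffun (hm : Measurable p) (hnn : ∀ t, 0 ≤ p t) (hi : Integrable p)
    (x : ℝ) : ∫ s in Iic x, Ffun p s = lowerDev p id x := by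
  have hF : ∀ s, 0 ≤ Ffun p s := fun s => setIntegral_nonneg measurableSet_Iic fun t _ => hnn t
  have hFm : Monotone (Ffun p) := fun u v huv =>
    setIntegral_mono_set hi.integrableOn (ae_of_all _ hnn) (Iic_subset_Iic.2 huv).eventuallyLE
  simp only [lowerDev, id]
  rw [integral_eq_lintegral_of_nonneg_ae (ae_of_all _ hF) hFm.measurable.aestronglyMeasurable,
    integral_eq_lintegral_of_nonneg_ae
      (ae_restrict_of_forall_mem measurableSet_Iic fun t ht => mul_nonneg (sub_nonneg.2 ht) (hnn t))
      (by fun_prop : Measurable fun t => (x - t) * p t).aestronglyMeasurable]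
  congr 1
  calc ∫⁻ s in Iic x, ENNReal.ofReal (Ffun p s)
      = ∫⁻ s in Iic x, ∫⁻ t, (Iic s).indicator (fun t => ENNReal.ofReal (p t)) t := by
        refine lintegral_congr fun s => ?_
        rw [lintegral_indicator measurableSet_Iic, Ffun,
          ofReal_integral_eq_lintegral_ofReal hi.integrableOn (ae_of_all _ hnn)]
    _ = ∫⁻ t, ∫⁻ s in Iic x, (Iic s).indicator (fun t => ENNReal.ofReal (p t)) t := by
        refine lintegral_lintegral_swap ?_
        have : (Function.uncurry fun s t => (Iic s).indicator (fun t => ENNReal.ofReal (p t)) t)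
            = {q : ℝ × ℝ | q.2 ≤ q.1}.indicator (fun q => ENNReal.ofReal (p q.2)) := by
          funext q
          simp [Function.uncurry, Set.indicator_apply]
        rw [this]
        exact ((ENNReal.measurable_ofReal.comp (hm.comp measurable_snd)).indicator
          (measurableSet_le measurable_snd measurable_fst)).aemeasurable
    _ = ∫⁻ t, ENNReal.ofReal ((x - t) * p t) := by
        refine lintegral_congr fun t => ?_
        have : ∀ s, (Iic s).indicator (fun t => ENNReal.ofReal (p t)) t
            = (Ici t).indicator (fun _ => ENNReal.ofReal (p t)) s := fun s => by
          simp [Set.indicator_apply]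
        simp only [this]
        rw [lintegral_indicator_const measurableSet_Ici, Measure.restrict_apply measurableSet_Ici,
          Ici_inter_Iic, Real.volume_Icc, ← ENNReal.ofReal_mul (hnn t), mul_comm]
    _ = ∫⁻ t in Iic x, ENNReal.ofReal ((x - t) * p t) := by
        refine (setLIntegral_eq_of_support_subset fun t ht => ?_).symm
        by_contra hx
        exact ht (ENNReal.ofReal_of_nonpos
          (mul_nonpos_of_nonpos_of_nonneg (sub_nonpos.2 (not_le.1 hx).le) (hnn t)))

theorem integral_Ioi_one_sub_Ffun (hm : Measurable p) (hnn : ∀ t, 0 ≤ p t) (hi : Integrable p)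
    (htot : ∫ t, p t = 1) (x : ℝ) : ∫ t in Ioi x, (1 - Ffun p t) = upperDev p id x := by
  -- Reflecting `t ↦ -t` turns the right tail of `p` into the left tail of `p (-·)`.
  have hreflect : ∀ t, 1 - Ffun p t = Ffun (fun s => p (-s)) (-t) := fun t => by
    rw [one_sub_Ffun hi htot, Ffun, integral_comp_neg_Iic, neg_neg]
  have hupper := integral_comp_neg_Iic (-x) (fun t => (t - x) * p t)
  rw [neg_neg] at hupper
  calc ∫ t in Ioi x, (1 - Ffun p t) = ∫ t in Ioi x, Ffun (fun s => p (-s)) (-t) := by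
        simp only [hreflect]
    _ = ∫ s in Iic (-x), Ffun (fun s => p (-s)) s := integral_comp_neg_Ioi x _
    _ = lowerDev (fun s => p (-s)) id (-x) :=
        integral_Iic_Ffun (hm.comp measurable_neg) (fun t => hnn _) hi.comp_neg (-x)
    _ = upperDev p id x := by
        simp only [lowerDev, upperDev, id, ← hupper]
        congr 1 with t
        ring_nf

variable {φ : ℝ → ℝ}

theorem integrable_sub_mul (hi : Integrable p) (hφ : Integrable fun t => φ t * p t) (y : ℝ) :
    Integrable fun t => (φ t - y) * p t :=
  (hφ.sub (hi.const_mul y)).congr (ae_of_all _ fun _ => (sub_mul _ _ _).symm)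

theorem integrable_const_sub_mul (hi : Integrable p) (hφ : Integrable fun t => φ t * p t)
    (y : ℝ) : Integrable fun t => (y - φ t) * p t :=
  ((hi.const_mul y).sub hφ).congr (ae_of_all _ fun _ => (sub_mul _ _ _).symm)

theorem LipschitzWith.integrable_mul {L : NNReal} (hφ : LipschitzWith L φ) (hi : Integrable p)
    (hmom : Integrable fun t => t * p t) : Integrable fun t => φ t * p t := by
  refine Integrable.mono' ((hi.norm.const_mul |φ 0|).add (hmom.norm.const_mul L))
    (hφ.continuous.aestronglyMeasurable.mul hi.aestronglyMeasurable) (ae_of_all _ fun t => ?_)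
  have hd := hφ.dist_le_mul t 0
  rw [Real.dist_eq, Real.dist_eq, sub_zero] at hd
  have hφt : |φ t| ≤ |φ 0| + L * |t| := by linarith [abs_sub_abs_le_abs_sub (φ t) (φ 0)]
  simp only [Pi.add_apply, norm_mul, Real.norm_eq_abs]
  nlinarith [abs_nonneg (p t)]

theorem lowerDev_eq (hi : Integrable p) (hφ : Integrable fun t => φ t * p t) (x : ℝ) :
    lowerDev p φ x = φ x * Ffun p x - ∫ t in Iic x, φ t * p t := by
  simp only [lowerDev, sub_mul]
  rw [integral_sub (hi.const_mul _).integrableOn hφ.integrableOn, integral_const_mul, Ffun]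

theorem upperDev_eq (hi : Integrable p) (htot : ∫ t, p t = 1)
    (hφ : Integrable fun t => φ t * p t) (x : ℝ) :
    upperDev p φ x = (∫ t in Ioi x, φ t * p t) - φ x * (1 - Ffun p x) := by
  simp only [upperDev, sub_mul]
  rw [integral_sub hφ.integrableOn (hi.const_mul _).integrableOn, integral_const_mul,
    one_sub_Ffun hi htot]

theorem sub_meanOf_eq (hi : Integrable p) (htot : ∫ t, p t = 1)
    (hφ : Integrable fun t => φ t * p t) (x : ℝ) :
    φ x - meanOf p φ = lowerDev p φ x - upperDev p φ x := by
  rw [lowerDev_eq hi hφ, upperDev_eq hi htot hφ, meanOf,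
    ← intervalIntegral.integral_Iic_add_Ioi (b := x) hφ.integrableOn hφ.integrableOn]
  ring

theorem integral_Iic_sub_meanOf_mul (hi : Integrable p) (htot : ∫ t, p t = 1)
    (hφ : Integrable fun t => φ t * p t) (x : ℝ) :
    ∫ t in Iic x, (φ t - meanOf p φ) * p t =
      -((1 - Ffun p x) * lowerDev p φ x + Ffun p x * upperDev p φ x) := by
  have hsplit := intervalIntegral.integral_Iic_add_Ioi (b := x) hφ.integrableOn hφ.integrableOn
  simp only [sub_mul]
  rw [integral_sub hφ.integrableOn (hi.const_mul _).integrableOn, integral_const_mul,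
    lowerDev_eq hi hφ, upperDev_eq hi htot hφ, meanOf, ← hsplit, Ffun]
  ring

theorem abs_lowerDev_le {L : NNReal} (hφ : LipschitzWith L φ) (hnn : ∀ t, 0 ≤ p t)
    (hi : Integrable p) (hmom : Integrable fun t => t * p t) (x : ℝ) :
    |lowerDev p φ x| ≤ L * lowerDev p id x := by
  rw [lowerDev, lowerDev, ← integral_const_mul, ← Real.norm_eq_abs]
  refine norm_integral_le_of_norm_le
    ((integrable_const_sub_mul hi hmom x).const_mul _).integrableOn
    (ae_restrict_of_forall_mem measurableSet_Iic fun t ht => ?_)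
  have hd := hφ.dist_le_mul x t
  rw [Real.dist_eq, Real.dist_eq, abs_of_nonneg (sub_nonneg.2 ht : (0 : ℝ) ≤ x - t)] at hd
  rw [norm_mul, Real.norm_eq_abs, Real.norm_of_nonneg (hnn t), id, id, ← mul_assoc]
  exact mul_le_mul_of_nonneg_right hd (hnn t)

theorem abs_upperDev_le {L : NNReal} (hφ : LipschitzWith L φ) (hnn : ∀ t, 0 ≤ p t)
    (hi : Integrable p) (hmom : Integrable fun t => t * p t) (x : ℝ) :
    |upperDev p φ x| ≤ L * upperDev p id x := by
  rw [upperDev, upperDev, ← integral_const_mul, ← Real.norm_eq_abs]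
  refine norm_integral_le_of_norm_le
    ((integrable_sub_mul hi hmom x).const_mul _).integrableOn
    (ae_restrict_of_forall_mem measurableSet_Ioi fun t ht => ?_)
  have hd := hφ.dist_le_mul t x
  rw [Real.dist_eq, Real.dist_eq, abs_of_nonneg (sub_nonneg.2 ht.le : (0 : ℝ) ≤ t - x)] at hd
  rw [norm_mul, Real.norm_eq_abs, Real.norm_of_nonneg (hnn t), id, id, ← mul_assoc]
  exact mul_le_mul_of_nonneg_right hd (hnn t)

end Density

theorem Ifun_eq_of_linear {p γ : ℝ → ℝ} {c : ℝ} (hi : Integrable p) (htot : ∫ t, p t = 1)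
    (hmom : Integrable fun t => t * p t) (hγ : ∀ y, γ y = c * (meanOf p id - y)) (x : ℝ) :
    Ifun γ p x = c * ((1 - Ffun p x) * lowerDev p id x + Ffun p x * upperDev p id x) := by
  calc Ifun γ p x = ∫ t in Iic x, -c * ((id t - meanOf p id) * p t) := by
        simp only [Ifun, hγ, id]
        congr 1 with t
        ring
    _ = _ := by
        rw [integral_const_mul, integral_Iic_sub_meanOf_mul (φ := id) hi htot hmom]
        ring

theorem setIntegral_pos_of_pos_on_Ioo {f : ℝ → ℝ} {S : Set ℝ} (hS : MeasurableSet S)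
    (hf : IntegrableOn f S) (hnn : ∀ t ∈ S, 0 ≤ f t) {u v : ℝ} (huv : u < v)
    (hsub : Ioo u v ⊆ S) (hpos : ∀ t ∈ Ioo u v, 0 < f t) : 0 < ∫ t in S, f t := by
  rw [setIntegral_pos_iff_support_of_nonneg_ae (ae_restrict_of_forall_mem hS hnn) hf]
  refine lt_of_lt_of_le ?_ (measure_mono fun t ht => ⟨(hpos t ht).ne', hsub ht⟩)
  rw [Real.volume_Ioo]
  exact ENNReal.ofReal_pos.2 (sub_pos.2 huv)

theorem isOpen_ooE (a b : EReal) : IsOpen (ooE a b) :=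
  isOpen_Ioo.preimage continuous_coe_real_ereal

theorem ooE_subset_ccE (a b : EReal) : ooE a b ⊆ ccE a b := fun _ hx => ⟨hx.1.le, hx.2.le⟩

namespace Cond1

variable {a b : EReal} {p : ℝ → ℝ} {x : ℝ}

theorem Ffun_pos (h1 : Cond1 a b p) (hx : x ∈ ooE a b) : 0 < Ffun p x := by
  obtain ⟨ε, hε, hball⟩ := Metric.isOpen_iff.1 (isOpen_ooE a b) x hx
  rw [Real.ball_eq_Ioo] at hball
  exact setIntegral_pos_of_pos_on_Ioo measurableSet_Iic h1.integrable.integrableOn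
    (fun t _ => h1.nonneg t) (by linarith : x - ε < x) (fun t ht => ht.2.le)
    (fun t ht => h1.pos t (hball ⟨ht.1, by linarith [ht.2]⟩))

theorem upperDev_id_pos (h1 : Cond1 a b p) (hmom : Integrable fun t => t * p t)
    (hx : x ∈ ooE a b) : 0 < upperDev p id x := by
  obtain ⟨ε, hε, hball⟩ := Metric.isOpen_iff.1 (isOpen_ooE a b) x hx
  rw [Real.ball_eq_Ioo] at hball
  exact setIntegral_pos_of_pos_on_Ioo measurableSet_Ioi
    (integrable_sub_mul h1.integrable hmom x).integrableOn
    (fun t ht => mul_nonneg (sub_nonneg.2 (le_of_lt ht)) (h1.nonneg t))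
    (by linarith : x < x + ε) (fun t ht => ht.1)
    (fun t ht => mul_pos (sub_pos.2 ht.1) (h1.pos t (hball ⟨by linarith [ht.1], ht.2⟩)))

end Cond1

-- `P * (I / P)` and `I / P` stand for `p η` and `η` as they occur in `gsol` and `gsol'`.
theorem stein_bounds_of_decomposition {F A B α β c P L I N : ℝ} (hF : 0 < F) (hF1 : F ≤ 1)
    (hA : 0 ≤ A) (hB : 0 < B) (hc : 0 < c) (hP : 0 < P) (hα : |α| ≤ L * A)
    (hβ : |β| ≤ L * B) (hI : I = c * ((1 - F) * A + F * B))
    (hN : N = -((1 - F) * α + F * β)) :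
    |N / (P * (I / P))| ≤ L / c ∧
      |(α - β - c * (B - A) * (N / (P * (I / P)))) / (I / P)| ≤
        2 * c * L * A * B / ((I / P) ^ 2 * P) := by
  have hG : 0 ≤ 1 - F := sub_nonneg.2 hF1
  have hIpos : 0 < I :=
    hI ▸ mul_pos hc (add_pos_of_nonneg_of_pos (mul_nonneg hG hA) (mul_pos hF hB))
  have hgsol : N / (P * (I / P)) = N / I := by rw [mul_div_cancel₀ _ hP.ne']
  have hN_le : |N| * c ≤ L * I := by
    calc |N| * c ≤ ((1 - F) * |α| + F * |β|) * c := by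
          rw [hN, abs_neg]
          gcongr
          refine (abs_add_le _ _).trans_eq ?_
          rw [abs_mul, abs_mul, abs_of_nonneg hG, abs_of_pos hF]
      _ ≤ ((1 - F) * (L * A) + F * (L * B)) * c := by gcongr
      _ = L * I := by rw [hI]; ring
  have hderiv :
      (α - β - c * (B - A) * (N / I)) / (I / P) = c * P * (B * α - A * β) / I ^ 2 := by
    rw [hN]
    field_simp
    rw [hI]
    ring
  have hK : |B * α - A * β| ≤ 2 * L * A * B := by
    calc |B * α - A * β| ≤ B * |α| + A * |β| := by
          refine (abs_sub _ _).trans_eq ?_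
          rw [abs_mul, abs_mul, abs_of_pos hB, abs_of_nonneg hA]
      _ ≤ B * (L * A) + A * (L * B) := by gcongr
      _ = 2 * L * A * B := by ring
  rw [hgsol]
  refine ⟨?_, ?_⟩
  · rw [abs_div, abs_of_pos hIpos, div_le_div_iff₀ hIpos hc]
    exact hN_le
  · rw [hderiv, show (I / P) ^ 2 * P = I ^ 2 / P by field_simp, div_div_eq_mul_div, abs_div,
      abs_mul, abs_of_pos (mul_pos hc hP), abs_of_pos (pow_pos hIpos 2),
      div_le_div_iff_of_pos_right (pow_pos hIpos 2)]
    nlinarith [mul_le_mul_of_nonneg_left hK (mul_pos hc hP).le]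

theorem gsol_bounds_of_lipschitzWith {a b : EReal} {p γ g : ℝ → ℝ} {c : ℝ} {L : NNReal}
    {x : ℝ}
    (h1 : Cond1 a b p) (hmom : Integrable fun t => t * p t) (hc : 0 < c)
    (hγ : ∀ y, γ y = c * (meanOf p id - y)) (hg : LipschitzWith L g) (hx : x ∈ ooE a b) :
    |gsol γ p g x| ≤ L / c ∧
      |gsol' γ p g x| ≤
        2 * c * L * lowerDev p id x * upperDev p id x / (etaFun γ p x ^ 2 * p x) := by
  have hgp := hg.integrable_mul h1.integrable hmom
  have hγx : γ x = c * (upperDev p id x - lowerDev p id x) := by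
    have hmean := sub_meanOf_eq (φ := id) h1.integrable h1.total hmom x
    rw [id] at hmean
    rw [hγ]
    linear_combination (-c) * hmean
  simp only [gsol', gsol, etaFun]
  rw [sub_meanOf_eq h1.integrable h1.total hgp, hγx]
  exact stein_bounds_of_decomposition (h1.Ffun_pos hx)
    (Ffun_le_one h1.nonneg h1.integrable h1.total x)
    (setIntegral_nonneg measurableSet_Iic fun t ht => mul_nonneg (sub_nonneg.2 ht) (h1.nonneg t))
    (h1.upperDev_id_pos hmom hx) hc (h1.pos x hx)
    (abs_lowerDev_le hg h1.nonneg h1.integrable hmom x)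
    (abs_upperDev_le hg h1.nonneg h1.integrable hmom x)
    (Ifun_eq_of_linear h1.integrable h1.total hmom hγ x)
    (integral_Iic_sub_meanOf_mul h1.integrable h1.total hgp x)

section Congr

variable {s : Set ℝ} {p h g : ℝ → ℝ}

theorem mul_eq_mul_of_eqOn (hp : ∀ x, x ∉ s → p x = 0) (hhg : EqOn h g s) (t : ℝ) :
    h t * p t = g t * p t := by
  by_cases ht : t ∈ s
  · rw [hhg ht]
  · rw [hp t ht, mul_zero, mul_zero]

theorem meanOf_congr (hp : ∀ x, x ∉ s → p x = 0) (hhg : EqOn h g s) :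
    meanOf p h = meanOf p g :=
  integral_congr_ae (ae_of_all _ (mul_eq_mul_of_eqOn hp hhg))

theorem gsol_congr (γ : ℝ → ℝ) (hp : ∀ x, x ∉ s → p x = 0) (hhg : EqOn h g s) :
    gsol γ p h = gsol γ p g := by
  funext x
  simp only [gsol, meanOf_congr hp hhg, sub_mul, mul_eq_mul_of_eqOn hp hhg]

theorem gsol'_congr (γ : ℝ → ℝ) (hp : ∀ x, x ∉ s → p x = 0) (hhg : EqOn h g s)
    {x : ℝ} (hx : x ∈ s) : gsol' γ p h x = gsol' γ p g x := by
  rw [gsol', gsol', gsol_congr γ hp hhg, meanOf_congr hp hhg, hhg hx]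

end Congr

/-- For the linear coefficient `γ(x) = c(E[Z] - x)`, `c > 0`, and Lipschitz `h`:
(a) `‖g_h‖ ≤ ‖h'‖/c`;
(b) `|g_h'(x)| ≤ 2c ‖h'‖ (∫_a^x F)(∫_x^b (1-F)) / (η(x)² p(x))`. -/
theorem cor_gsol_linear_gamma (a b : EReal) (p : ℝ → ℝ) (c : ℝ) (hc : 0 < c)
    (h1 : Cond1 a b p)
    (hmom : MeasureTheory.Integrable (fun x => x * p x)) :
    ∀ (h : ℝ → ℝ) (L : NNReal), LipschitzOnWith L h (ccE a b) →
      (∀ x ∈ ooE a b,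
        |gsol (fun y => c * ((∫ z, z * p z) - y)) p h x| ≤ L / c) ∧
      (∀ x ∈ ooE a b,
        |gsol' (fun y => c * ((∫ z, z * p z) - y)) p h x| ≤
          2 * c * L * (∫ s in Iic x, Ffun p s) * (∫ t in Ioi x, (1 - Ffun p t)) /
            ((etaFun (fun y => c * ((∫ z, z * p z) - y)) p x) ^ 2 * p x)) := by
  intro h L hLip
  obtain ⟨g, hg, hgh⟩ := hLip.extend_real
  have hhg : EqOn h g (ooE a b) := hgh.mono (ooE_subset_ccE a b)
  have hbounds := fun x (hx : x ∈ ooE a b) => gsol_bounds_of_lipschitzWith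
    (γ := fun y => c * ((∫ z, z * p z) - y)) h1 hmom hc (fun _ => rfl) hg hx
  refine ⟨fun x hx => ?_, fun x hx => ?_⟩
  · rw [gsol_congr _ h1.zero hhg]
    exact (hbounds x hx).1
  · rw [gsol'_congr _ h1.zero hhg hx, integral_Iic_Ffun h1.meas h1.nonneg h1.integrable,
      integral_Ioi_one_sub_Ffun h1.meas h1.nonneg h1.integrable h1.total]
    exact (hbounds x hx).2

end
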